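/- Let m, n be non-negative integers and let μ, ν be partitions with l(μ) ≤ m, μ_1 ≤ n and l(ν) ≤ n. Then the (m,n)-overlap μ ⋆_{m,n} ν equals the empty partition if and only if ν_1 ≤ m and ν'_i = n − μ_{m+1−i} for all 1 ≤ i ≤ m; that is, two partitions do not overlap precisely when one is (the conjugate of) the (n,m)-complement of the other in the rectangle ⟨n^m⟩. -/

import Mathlib

/-!
The overlap is empty exactly when the `m + n` numbers `μ_i + m - i` and `ν_j + n - j` are
`0, 1, …, m + n - 1`. Since `ν_j + ν'_i + 1 ≠ i + j` for all `i, j ≥ 1` (a hook length never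
vanishes), the numbers `ν_j + n - j` and `n - 1 + i - ν'_i` never coincide, so when
`ν'_i = n - μ_{m+1-i}` the two families fill `{0, …, m + n - 1}` by counting. Conversely, the
`(m, n)`-complement ν̃ of `μ'` satisfies this relation, so the hooks of `ν` and of ν̃ are
the same set; a partition is determined by its hooks, hence `ν = ν̃`.
-/

open scoped Classical

/-- `f : ℕ → ℕ` represents a partition via its parts `f 1 ≥ f 2 ≥ ⋯`
(indices start at `1`; we normalize the unused value at `0` by `f 0 = f 1`). -/
def IsPartition (f : ℕ → ℕ) : Prop :=
  f 0 = f 1 ∧ (∀ i j, i ≤ j → f j ≤ f i) ∧ ∃ N, ∀ i, N ≤ i → f i = 0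

/-- the partition `f` has length (number of positive parts) at most `r`,
i.e. `l(f) ≤ r`. -/
def LenLE (f : ℕ → ℕ) (r : ℕ) : Prop := ∀ i, r < i → f i = 0

/-- two partitions have the same parts. -/
def EqParts (f g : ℕ → ℕ) : Prop := ∀ i, 1 ≤ i → f i = g i

/-- normalize the value at the (unused) index `0`. -/
def pad (f : ℕ → ℕ) : ℕ → ℕ := fun i => if i = 0 then f 1 else f i

/-- the multiset `{f i + N - i : i = 1, …, N}`. -/
def hooks (N : ℕ) (f : ℕ → ℕ) : Multiset ℕ :=
  (Multiset.range N).map (fun i => f (i + 1) + N - (i + 1))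

/-- `lam` is the `(m,n)`-overlap of `mu` and `nu`, i.e. `mu ⋆_{m,n} nu = lam`:
`lam` is a partition of length at most `m + n` such that the sequence
`(lam i + (m+n) - i)_{i=1..m+n}` is a rearrangement of the concatenation of
`(mu i + m - i)_{i=1..m}` and `(nu j + n - j)_{j=1..n}`. -/
def IsOverlap (m n : ℕ) (mu nu lam : ℕ → ℕ) : Prop :=
  LenLE lam (m + n) ∧ hooks (m + n) lam = hooks m mu + hooks n nu

/-- `mu ⋆_{m,n} nu = ∞`: the two hook sequences share a common value. -/
def OverlapInfinite (m n : ℕ) (mu nu : ℕ → ℕ) : Prop :=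
  ∃ a, a ∈ hooks m mu ∧ a ∈ hooks n nu

/-- the sign `ε_{m,n}(mu, nu)` of the permutation sorting the concatenation of
`(mu i + m - i)_{i=1..m}` and `(nu j + n - j)_{j=1..n}` into strictly decreasing
order, computed as `(-1)` to the number of inversions. -/
def overlapSign (m n : ℕ) (mu nu : ℕ → ℕ) : ℤ :=
  (-1) ^ (((Finset.range m ×ˢ Finset.range n).filter (fun p =>
    mu (p.1 + 1) + m - (p.1 + 1) < nu (p.2 + 1) + n - (p.2 + 1))).card)

/-- the truncation `(f_1, …, f_r)` of a partition. -/
def truncateP (f : ℕ → ℕ) (r : ℕ) : ℕ → ℕ := pad fun i => if i ≤ r then f i else 0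

/-- `μ + ⟨k^l⟩ = (μ_1 + k, …, μ_l + k)`. -/
def addRect (mu : ℕ → ℕ) (k l : ℕ) : ℕ → ℕ := pad fun i => if i ≤ l then mu i + k else 0

/-- `μ − ⟨k^l⟩ = (μ_1 − k, …, μ_l − k)`. -/
def subRect (mu : ℕ → ℕ) (k l : ℕ) : ℕ → ℕ := pad fun i => if i ≤ l then mu i - k else 0

/-- `ν ∪ a`: `ν` regarded as a sequence of length `r`, with the sequence `a`
appended after position `r`. -/
def concatSeq (nu : ℕ → ℕ) (r : ℕ) (tail : ℕ → ℕ) : ℕ → ℕ :=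
  pad fun i => if i ≤ r then nu i else tail (i - r)

/-- the rectangular partition `⟨a^b⟩` (with `b` parts equal to `a`). -/
def rectP (a b : ℕ) : ℕ → ℕ := pad fun i => if i ≤ b then a else 0

/-- the `(m,n)`-complement `λ̃ = (m − λ_n, …, m − λ_1)` of a partition `λ ⊂ ⟨m^n⟩`. -/
def complSeq (m n : ℕ) (lam : ℕ → ℕ) : ℕ → ℕ :=
  pad fun i => if i ≤ n then m - lam (n + 1 - i) else 0

noncomputable section

/-- the `i`-th part `λ'_i = #{j ≥ 1 : λ_j ≥ i}` of the conjugate partition. -/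
def conjPart (f : ℕ → ℕ) (i : ℕ) : ℕ := {j : ℕ | 1 ≤ j ∧ i ≤ f j}.ncard

/-- the conjugate partition `λ'`. -/
def conjP (f : ℕ → ℕ) : ℕ → ℕ := pad fun i => conjPart f i

/-- the set of integers `k ≤ min{m,n}` with `λ_{n+1−k} ≤ m − k`. -/
def indexSet (m n : ℕ) (lam : ℕ → ℕ) : Set ℤ :=
  {k : ℤ | k ≤ min (m : ℤ) (n : ℤ) ∧ (lam ((n : ℤ) + 1 - k).toNat : ℤ) ≤ (m : ℤ) - k}

/-- `k` is the `(m,n)`-index of `lam`: the largest integer `k ≤ min{m,n}`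
with `λ_{n+1−k} ≤ m − k`. -/
def IsIndex (m n : ℕ) (lam : ℕ → ℕ) (k : ℤ) : Prop := IsGreatest (indexSet m n lam) k

/-- the `(m,n)`-index of `lam`. -/
def indexOf (m n : ℕ) (lam : ℕ → ℕ) : ℤ := sSup (indexSet m n lam)

variable {F : Type*} [Field F]

/-- `Δ(X) = ∏_{i<j} (X_i − X_j)`. -/
def vanDet {n : ℕ} (X : Fin n → F) : F :=
  ∏ i : Fin n, ∏ j : Fin n, if i < j then X i - X j else 1

/-- `Δ(X; Y) = ∏_{x ∈ X, y ∈ Y} (x − y)`. -/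
def vanPair {n m : ℕ} (X : Fin n → F) (Y : Fin m → F) : F :=
  ∏ i, ∏ j, (X i - Y j)

/-- the Schur function `s_λ(X)`. -/
def schur {n : ℕ} (lam : ℕ → ℕ) (X : Fin n → F) : F :=
  if LenLE lam n then
    (Matrix.of fun i j : Fin n =>
      X i ^ (lam ((j : ℕ) + 1) + n - ((j : ℕ) + 1))).det / vanDet X
  else 0

/-- the subsequence of `X` indexed by `I` (in increasing order of indices). -/
def subSeq {n : ℕ} (X : Fin n → F) (I : Finset (Fin n)) : Fin I.card → F :=
  fun j => X (I.orderIsoOfFin rfl j).1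

/-- the sign `ε(λ) = (−1)^{λ_1+⋯+λ_{n−k}} (−1)^{mk} (−1)^{k(k−1)/2}` from the
determinantal formula. -/
def LSsign (m n k : ℕ) (lam : ℕ → ℕ) : ℤ :=
  (-1) ^ (∑ i ∈ Finset.range (n - k), lam (i + 1)) * (-1) ^ (m * k) *
    (-1) ^ (k * (k - 1) / 2)

/-- the Moens–Van der Jeugt block matrix. -/
def LSmat (k : ℕ) {n m : ℕ} (lam : ℕ → ℕ) (X : Fin n → F) (Y : Fin m → F) :
    Matrix (Fin (n + (m - k))) (Fin (n + (m - k))) F :=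
  Matrix.of fun r c =>
    if hr : (r : ℕ) < n then
      if hc : (c : ℕ) < m then (X ⟨(r : ℕ), hr⟩ - Y ⟨(c : ℕ), hc⟩)⁻¹
      else X ⟨(r : ℕ), hr⟩ ^
        ((lam ((c : ℕ) - m + 1) : ℤ) + (n : ℤ) - (m : ℤ) - (((c : ℕ) - m + 1 : ℕ) : ℤ))
    else
      if hc : (c : ℕ) < m then
        Y ⟨(c : ℕ), hc⟩ ^
          ((conjPart lam ((r : ℕ) - n + 1) : ℤ) + (m : ℤ) - (n : ℤ) - (((r : ℕ) - n + 1 : ℕ) : ℤ))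
      else 0

/-- the Littlewood–Schur function `LS_λ(−X; Y)`, defined by the determinantal
formula of Moens and Van der Jeugt: it is `0` if the `(m,n)`-index `k` of `λ` is
negative, and otherwise equals `ε(λ) · Δ(Y;X)/(Δ(X)Δ(Y)) · det M`. -/
def LS {n m : ℕ} (lam : ℕ → ℕ) (X : Fin n → F) (Y : Fin m → F) : F :=
  if indexOf m n lam < 0 then 0
  else (LSsign m n (indexOf m n lam).toNat lam : F) * vanPair Y X /
    (vanDet X * vanDet Y) * (LSmat (indexOf m n lam).toNat lam X Y).det

/-- `walkMu lam n I` is the partition with `i`-th part `λ_{V_i} + n + i − V_i`,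
where `V_1 < ⋯ < V_card(I)` is the increasing (1-based) enumeration of `I`. -/
def walkMu (lam : ℕ → ℕ) (n : ℕ) {N : ℕ} (I : Finset (Fin N)) : ℕ → ℕ :=
  pad fun i =>
    if h : 1 ≤ i ∧ i ≤ I.card then
      lam (((I.orderIsoOfFin rfl ⟨i - 1, by omega⟩).1 : ℕ) + 1) +
        (n + i - (((I.orderIsoOfFin rfl ⟨i - 1, by omega⟩).1 : ℕ) + 1))
    else 0

/-- `C_N(K)`: the set `{N − j + 1 : j ∈ {1,…,N} ∖ K}`. -/
def Cfin (N : ℕ) (K : Finset ℕ) : Finset ℕ :=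
  (Finset.Icc 1 N \ K).image (fun j => N + 1 - j)

/-- the subpartition `sub_N(λ, s)`: its `j`-th part is
`λ_{s_j} + (N − s_j) − (r − j)`, where `s_1 < ⋯ < s_r` are the elements of `s`. -/
def subPartF (N : ℕ) (lam : ℕ → ℕ) (s : Finset ℕ) : ℕ → ℕ :=
  pad fun j =>
    if h : 1 ≤ j ∧ j ≤ s.card then
      lam ((s.orderIsoOfFin rfl ⟨j - 1, by omega⟩).1) +
        (N - (s.orderIsoOfFin rfl ⟨j - 1, by omega⟩).1) - (s.card - j)
    else 0

end

/-- `α` is a quasi-partition associated to the subset with membership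
predicate `inV` (the complement being taken inside `{1, …, m+n}`). -/
def IsQuasiPartition (m n : ℕ) (inV : ℕ → Prop) (α : ℕ → ℤ) : Prop :=
  0 ≤ α (m + n) ∧
  (∀ i, 1 < i → i < m + n → ¬(α (i - 1) < α i ∧ α i < α (i + 1))) ∧
  (∀ i, 1 ≤ i → i < m + n → ((inV i ↔ inV (i + 1)) → α (i + 1) ≤ α i)) ∧
  (∀ i, 1 ≤ i → i < m + n → (¬(inV i ↔ inV (i + 1)) → α (i + 1) ≤ α i + 1))

/-- the integer sequence `α_1, …, α_N` is a partition: non-increasing and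
non-negative. -/
def IsPartitionSeqZ (N : ℕ) (α : ℕ → ℤ) : Prop :=
  (∀ i j, 1 ≤ i → i ≤ j → j ≤ N → α j ≤ α i) ∧ ∀ i, 1 ≤ i → i ≤ N → 0 ≤ α i

lemma Multiset.eq_range_of_nodup {s : Multiset ℕ} {N : ℕ} (hs : s.Nodup) (hlt : ∀ a ∈ s, a < N)
    (hcard : Multiset.card s = N) : s = Multiset.range N :=
  Multiset.eq_of_le_of_card_le
    ((Multiset.le_iff_subset hs).mpr fun a ha => Multiset.mem_range.mpr (hlt a ha))
    (by simp [hcard])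

section Conjugate

variable {f g : ℕ → ℕ} {r : ℕ}

lemma antitone_pad (hf : ∀ i j, 1 ≤ i → i ≤ j → f j ≤ f i) : Antitone (pad f) := by
  intro i j hij
  unfold pad
  split_ifs <;> apply hf <;> omega

lemma setOf_le_subset_Icc (hf : LenLE f r) {j : ℕ} (hj : 1 ≤ j) :
    {t : ℕ | 1 ≤ t ∧ j ≤ f t} ⊆ Set.Icc 1 r := by
  rintro t ⟨ht, hjt⟩
  refine ⟨ht, not_lt.mp fun hrt => ?_⟩
  have := hf t hrt
  omega

lemma conjPart_le (hf : LenLE f r) {j : ℕ} (hj : 1 ≤ j) : conjPart f j ≤ r := by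
  simpa [conjPart] using Set.ncard_le_ncard (setOf_le_subset_Icc hf hj) (Set.finite_Icc 1 r)

lemma conjPart_anti (hf : LenLE f r) {a b : ℕ} (ha : 1 ≤ a) (hab : a ≤ b) :
    conjPart f b ≤ conjPart f a :=
  Set.ncard_le_ncard (fun _ ⟨ht, hbt⟩ => ⟨ht, hab.trans hbt⟩)
    ((Set.finite_Icc 1 r).subset (setOf_le_subset_Icc hf ha))

lemma conjPart_eq_of_forall_iff {j K : ℕ} (h : ∀ t, 1 ≤ t → (j ≤ f t ↔ t ≤ K)) :
    conjPart f j = K := by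
  have hset : {t : ℕ | 1 ≤ t ∧ j ≤ f t} = Set.Icc 1 K := by
    ext t
    simp only [Set.mem_ofPred_eq, Set.mem_Icc]
    exact ⟨fun ⟨ht, hjt⟩ => ⟨ht, (h t ht).1 hjt⟩, fun ⟨ht, htK⟩ => ⟨ht, (h t ht).2 htK⟩⟩
  simp [conjPart, hset]

lemma le_conjPart_iff (hf : Antitone f) (hr : LenLE f r) {i j : ℕ} (hi : 1 ≤ i) (hj : 1 ≤ j) :
    i ≤ conjPart f j ↔ j ≤ f i := by
  have hfin := (Set.finite_Icc 1 r).subset (setOf_le_subset_Icc hr hj)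
  constructor
  · intro hij
    by_contra hlt
    have hsub : {t : ℕ | 1 ≤ t ∧ j ≤ f t} ⊆ Set.Icc 1 (i - 1) := fun t ⟨ht, hjt⟩ =>
      ⟨ht, not_lt.mp fun hit => hlt (hjt.trans (hf (by omega)))⟩
    have := Set.ncard_le_ncard hsub (Set.finite_Icc _ _)
    simp only [Set.ncard_Icc_nat] at this
    unfold conjPart at hij
    omega
  · intro hji
    have hsub : Set.Icc 1 i ⊆ {t : ℕ | 1 ≤ t ∧ j ≤ f t} := fun t ⟨ht, hti⟩ =>
      ⟨ht, hji.trans (hf hti)⟩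
    simpa [conjPart] using Set.ncard_le_ncard hsub hfin

lemma add_conjPart_add_one_ne (hf : Antitone f) (hr : LenLE f r) {i j : ℕ}
    (hi : 1 ≤ i) (hj : 1 ≤ j) : f i + conjPart f j + 1 ≠ i + j := by
  have := le_conjPart_iff hf hr hi hj
  by_cases hji : j ≤ f i <;> omega

lemma conjPart_congr (h : EqParts f g) (j : ℕ) : conjPart f j = conjPart g j := by
  unfold conjPart
  congr 1
  ext t
  simp only [Set.mem_ofPred_eq]
  exact and_congr_right fun ht => by rw [h t ht]

end Conjugate

section Hooks

variable {f g : ℕ → ℕ} {n : ℕ}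

lemma mem_hooks {a : ℕ} : a ∈ hooks n f ↔ ∃ i, 1 ≤ i ∧ i ≤ n ∧ f i + n = a + i := by
  simp only [hooks, Multiset.mem_map, Multiset.mem_range]
  constructor
  · rintro ⟨i, hi, rfl⟩
    exact ⟨i + 1, by omega, by omega, by omega⟩
  · rintro ⟨i, hi, hin, hfi⟩
    exact ⟨i - 1, by omega, by rw [Nat.sub_add_cancel hi]; omega⟩

lemma sortedGT_hookList (hf : Antitone f) :
    ((List.range n).map fun i => f (i + 1) + n - (i + 1)).SortedGT := by
  refine List.Pairwise.sortedGT ?_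
  rw [List.pairwise_map]
  refine List.Pairwise.imp_of_mem (fun ha hb hab => ?_) List.pairwise_lt_range
  rw [List.mem_range] at ha hb
  have : f (_ + 1) ≤ f (_ + 1) := hf (Nat.succ_le_succ hab.le)
  omega

lemma nodup_hooks (hf : Antitone f) : (hooks n f).Nodup :=
  Multiset.coe_nodup.mpr (sortedGT_hookList hf).nodup

lemma eqParts_of_hooks_eq (hf : Antitone f) (hg : Antitone g) (hfn : LenLE f n)
    (hgn : LenLE g n) (h : hooks n f = hooks n g) : EqParts f g := by
  have hlist := (Multiset.coe_eq_coe.mp h).eq_of_sortedGE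
    (sortedGT_hookList hf).sortedGE (sortedGT_hookList hg).sortedGE
  intro j hj
  by_cases hjn : j ≤ n
  · have := List.map_inj_left.mp hlist (j - 1) (List.mem_range.mpr (by omega))
    rw [Nat.sub_add_cancel hj] at this
    omega
  · rw [hfn j (by omega), hgn j (by omega)]

lemma hooks_zero : hooks n (fun _ => 0) = Multiset.range n := by
  refine Multiset.eq_range_of_nodup (nodup_hooks antitone_const) (fun a ha => ?_)
    (by simp [hooks])
  obtain ⟨i, hi, hin, hai⟩ := mem_hooks.mp ha
  omega

end Hooks

lemma hooks_add_hooks_eq_range {m n : ℕ} {mu nu : ℕ → ℕ} (hmu : Antitone mu) (hnu : Antitone nu)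
    (hnul : LenLE nu n) (hmu1 : mu 1 ≤ n) (hnu1 : nu 1 ≤ m)
    (hc : ∀ i, 1 ≤ i → i ≤ m → conjPart nu i = n - mu (m + 1 - i)) :
    hooks m mu + hooks n nu = Multiset.range (m + n) := by
  have hmu_le : ∀ i, 1 ≤ i → mu i ≤ n := fun i hi => (hmu hi).trans hmu1
  have hnu_le : ∀ j, 1 ≤ j → nu j ≤ m := fun j hj => (hnu hj).trans hnu1
  have hdisj : Disjoint (hooks m mu) (hooks n nu) := by
    refine Multiset.disjoint_left.mpr fun {a} ha hb => ?_
    obtain ⟨i, hi, him, hia⟩ := mem_hooks.mp ha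
    obtain ⟨j, hj, hjn, hja⟩ := mem_hooks.mp hb
    have hci := hc (m + 1 - i) (by omega) (by omega)
    rw [Nat.sub_sub_self (by omega : i ≤ m + 1)] at hci
    have := add_conjPart_add_one_ne hnu hnul hj (show 1 ≤ m + 1 - i by omega)
    have := hmu_le i hi
    omega
  refine Multiset.eq_range_of_nodup
    (Multiset.nodup_add.mpr ⟨nodup_hooks hmu, nodup_hooks hnu, hdisj⟩) (fun a ha => ?_)
    (by simp [hooks])
  rcases Multiset.mem_add.mp ha with ha | ha
  · obtain ⟨i, hi, -, hia⟩ := mem_hooks.mp ha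
    have := hmu_le i hi
    omega
  · obtain ⟨j, hj, -, hja⟩ := mem_hooks.mp ha
    have := hnu_le j hj
    omega

section ComplementOfConjugate

variable {m n : ℕ} {mu : ℕ → ℕ}

lemma complSeq_conjP_of_le {j : ℕ} (hj : 1 ≤ j) (hjn : j ≤ n) :
    complSeq m n (conjP mu) j = m - conjPart mu (n + 1 - j) := by
  simp [complSeq, conjP, pad, hjn, show j ≠ 0 by omega, show n + 1 - j ≠ 0 by omega]

lemma lenLE_complSeq (lam : ℕ → ℕ) : LenLE (complSeq m n lam) n := by
  intro i hi
  simp [complSeq, pad, show i ≠ 0 by omega, show ¬i ≤ n by omega]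

lemma complSeq_conjP_one_le : complSeq m n (conjP mu) 1 ≤ m := by
  simp only [complSeq, pad]
  split_ifs <;> omega

lemma antitone_complSeq_conjP (hmul : LenLE mu m) : Antitone (complSeq m n (conjP mu)) := by
  refine antitone_pad fun i j hi hij => ?_
  by_cases hjn : j ≤ n
  · simp only [if_pos hjn, if_pos (hij.trans hjn), conjP, pad, show n + 1 - j ≠ 0 by omega,
      show n + 1 - i ≠ 0 by omega, if_false]
    have := conjPart_anti hmul (show 1 ≤ n + 1 - j by omega) (show n + 1 - j ≤ n + 1 - i by omega)
    omega
  · simp [hjn]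

lemma conjPart_complSeq_conjP (hmu : Antitone mu) (hmul : LenLE mu m) (hmu1 : mu 1 ≤ n)
    {i : ℕ} (hi : 1 ≤ i) (him : i ≤ m) :
    conjPart (complSeq m n (conjP mu)) i = n - mu (m + 1 - i) := by
  refine conjPart_eq_of_forall_iff fun j hj => ?_
  have hmu_le : mu (m + 1 - i) ≤ n := (hmu (show 1 ≤ m + 1 - i by omega)).trans hmu1
  by_cases hjn : j ≤ n
  · rw [complSeq_conjP_of_le hj hjn]
    have := conjPart_le hmul (show 1 ≤ n + 1 - j by omega)
    have := le_conjPart_iff hmu hmul (show 1 ≤ m + 1 - i by omega) (show 1 ≤ n + 1 - j by omega)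
    omega
  · rw [lenLE_complSeq _ j (by omega)]
    omega

end ComplementOfConjugate

/-- **Two partitions do not overlap precisely when they are complementary**:
for `μ ⊂ ⟨n^m⟩` and `l(ν) ≤ n`, the `(m,n)`-overlap of `μ` and `ν` is the empty
partition iff `ν_1 ≤ m` and `ν'_i = n − μ_{m+1−i}` for all `1 ≤ i ≤ m`. -/
theorem overlap_empty_iff_complement
    {m n : ℕ} (mu nu : ℕ → ℕ) (hmu : IsPartition mu) (hnu : IsPartition nu)
    (hmul : LenLE mu m) (hmu1 : mu 1 ≤ n) (hnul : LenLE nu n) :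
    IsOverlap m n mu nu (fun _ => 0) ↔
      (nu 1 ≤ m ∧ ∀ i, 1 ≤ i → i ≤ m → conjPart nu i = n - mu (m + 1 - i)) := by
  have hmuA : Antitone mu := fun i j h => hmu.2.1 i j h
  have hnuA : Antitone nu := fun i j h => hnu.2.1 i j h
  simp only [IsOverlap, hooks_zero, show LenLE (fun _ => 0) (m + n) from fun _ _ => rfl,
    true_and]
  constructor
  · intro hrange
    set nu' := complSeq m n (conjP mu)
    have hc' : ∀ i, 1 ≤ i → i ≤ m → conjPart nu' i = n - mu (m + 1 - i) :=
      fun i hi him => conjPart_complSeq_conjP hmuA hmul hmu1 hi him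
    have hrange' := hooks_add_hooks_eq_range hmuA (antitone_complSeq_conjP hmul)
      (lenLE_complSeq _) hmu1 complSeq_conjP_one_le hc'
    have hhooks : hooks n nu = hooks n nu' := add_left_cancel (hrange.symm.trans hrange'.symm)
    have hnu' : EqParts nu nu' :=
      eqParts_of_hooks_eq hnuA (antitone_complSeq_conjP hmul) hnul (lenLE_complSeq _) hhooks
    refine ⟨hnu' 1 le_rfl ▸ complSeq_conjP_one_le, fun i hi him => ?_⟩
    rw [conjPart_congr hnu', hc' i hi him]
  · rintro ⟨hnu1, hc⟩
    exact (hooks_add_hooks_eq_range hmuA hnuA hnul hmu1 hnu1 hc).symm
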